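/- (Theorem 2) Suppose the competing mechanism game relative to Γ is regular, that for each principal m the outer infimum defining V̲^m is attained by some t̃^{-m,m} ∈ T^{-m}, and that for each principal m the set Γ^m contains every mechanism of the given message spaces, including mechanisms whose assigned transfer schedules are independent of agents' messages and whose range over the principal's own messages is all of T^m. Then the set of Γ-equilibrium allocations equals the set of PIR-AM allocations: Z^Γ = Z*. -/

import Mathlib

set_option linter.unusedSectionVars false
set_option linter.unusedVariables false


open scoped Classical
open Finset

noncomputable section

namespace CMGamma

/-- A profile of transfer schedules of one principal: a nonnegative payment
schedule for each agent. -/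
def Sched (N : Type*) (S : N → Type*) : Type _ := ∀ n : N, S n → NNReal

/-- A mechanism of a principal with own-message set `Com0` and agents' message sets
`Com`: transfer schedules for the agents as a function of the principal's own message
and the agents' messages. -/
def Mech (N : Type*) (S : N → Type*) (Com0 : Type*) (Com : N → Type*) : Type _ :=
  ∀ n : N, (Com0 × ∀ i : N, Com i) → S n → NNReal

/-- A profile of mechanisms, one for each principal. -/
abbrev MechProfile (M N : Type*) (S : N → Type*) (C0 : M → Type*)
    (C : M → N → Type*) : Type _ :=
  ∀ m : M, Mech N S (C0 m) (C m)

/-- Agents' communication strategies: a message to each principal given the observed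
profile of mechanisms. -/
abbrev AgentComm (M N : Type*) (S : N → Type*) (C0 : M → Type*)
    (C : M → N → Type*) : Type _ :=
  ∀ n : N, MechProfile M N S C0 C → ∀ m : M, C m n

/-- Principals' self-communication strategies: a message to oneself given one's own
mechanism. -/
abbrev PrinComm (M N : Type*) (S : N → Type*) (C0 : M → Type*)
    (C : M → N → Type*) : Type _ :=
  ∀ m : M, Mech N S (C0 m) (C m) → C0 m

/-- Agents' action strategies: an action given the profile of mechanisms, the agent's
own messages, and the assigned transfer schedules. -/
abbrev ActStrat (M N : Type*) (S : N → Type*) (C0 : M → Type*)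
    (C : M → N → Type*) : Type _ :=
  ∀ n : N, MechProfile M N S C0 C → (∀ m : M, C m n) → (M → Sched N S) → S n

variable {M N : Type*} [Fintype M] [Fintype N] [DecidableEq M] [DecidableEq N]
variable {S : N → Type*} [∀ n, Fintype (S n)] [∀ n, Nonempty (S n)]
variable {C0 : M → Type*} {C : M → N → Type*}

/-- The schedules assigned to the agents given the mechanisms and communication
strategies. -/
def assigned (gam : MechProfile M N S C0 C) (xA : AgentComm M N S C0 C)
    (x0 : PrinComm M N S C0 C) : M → Sched N S :=
  fun m n => gam m n (x0 m (gam m), fun i => xA i gam m)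

/-- The action profile induced by the strategies. -/
def act (gam : MechProfile M N S C0 C) (xA : AgentComm M N S C0 C)
    (x0 : PrinComm M N S C0 C) (sig : ActStrat M N S C0 C) : ∀ n, S n :=
  fun n => sig n gam (xA n gam) (assigned gam xA x0)

/-- Principal `m`'s net payoff. -/
def V (G : M → (∀ n, S n) → ℝ) (gam : MechProfile M N S C0 C)
    (xA : AgentComm M N S C0 C) (x0 : PrinComm M N S C0 C)
    (sig : ActStrat M N S C0 C) (m : M) : ℝ :=
  G m (act gam xA x0 sig) - ∑ n, (assigned gam xA x0 m n (act gam xA x0 sig n) : ℝ)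

/-- Condition 1: agents' actions are optimal given any assigned schedules. -/
def ActOpt (F : ∀ n : N, S n → ℝ) (sig : ActStrat M N S C0 C) : Prop :=
  ∀ (n : N) (gam : MechProfile M N S C0 C) (cn : ∀ m : M, C m n)
    (t : M → Sched N S) (s' : S n),
    F n s' + ∑ m, (t m n s' : ℝ) ≤
      F n (sig n gam cn t) + ∑ m, (t m n (sig n gam cn t) : ℝ)

/-- Agent `n`'s continuation payoff when she unilaterally sends the messages `cn`
while the other agents and the principals follow `(xA, x0)`. -/
def agentPayoff (F : ∀ n : N, S n → ℝ) (sig : ActStrat M N S C0 C)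
    (gam : MechProfile M N S C0 C) (xA : AgentComm M N S C0 C)
    (x0 : PrinComm M N S C0 C) (n : N) (cn : ∀ m : M, C m n) : ℝ :=
  let t : M → Sched N S :=
    fun m i => gam m i (x0 m (gam m), Function.update (fun j => xA j gam m) n (cn m));
  F n (sig n gam cn t) + ∑ m, (t m n (sig n gam cn t) : ℝ)

/-- Condition 2: each agent's message profile is a best response given the others'
messages and the induced schedules and continuation actions. -/
def MsgOpt (F : ∀ n : N, S n → ℝ) (sig : ActStrat M N S C0 C)
    (xA : AgentComm M N S C0 C) (x0 : PrinComm M N S C0 C) : Prop :=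
  ∀ (n : N) (gam : MechProfile M N S C0 C) (cn : ∀ m : M, C m n),
    agentPayoff F sig gam xA x0 n cn ≤ agentPayoff F sig gam xA x0 n (xA n gam)

/-- Principal `m`'s net payoff when he sends the message `c0` to himself while all
other players follow their strategies. -/
def prinPayoffAt (G : M → (∀ n, S n) → ℝ) (gam : MechProfile M N S C0 C)
    (xA : AgentComm M N S C0 C) (x0 : PrinComm M N S C0 C)
    (sig : ActStrat M N S C0 C) (m : M) (c0 : C0 m) : ℝ :=
  let t : M → Sched N S :=
    Function.update (assigned gam xA x0) m fun i => gam m i (c0, fun j => xA j gam m);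
  G m (fun n => sig n gam (xA n gam) t) - ∑ n, (t m n (sig n gam (xA n gam) t) : ℝ)

/-- Condition 3: each principal's self-message is optimal given his mechanism and the
others' strategies, for any mechanism he may offer. -/
def SelfOpt (G : M → (∀ n, S n) → ℝ) (Gam : ∀ m : M, Set (Mech N S (C0 m) (C m)))
    (gamhat : MechProfile M N S C0 C) (xA : AgentComm M N S C0 C)
    (x0 : PrinComm M N S C0 C) (sig : ActStrat M N S C0 C) : Prop :=
  ∀ (m : M), ∀ gm ∈ Gam m, ∀ c0 : C0 m,
    prinPayoffAt G (Function.update gamhat m gm) xA x0 sig m c0 ≤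
      prinPayoffAt G (Function.update gamhat m gm) xA x0 sig m (x0 m gm)

/-- Condition 4: no principal gains by unilaterally replacing his mechanism with any
other mechanism in `Γ^m`. -/
def MechOpt (G : M → (∀ n, S n) → ℝ) (Gam : ∀ m : M, Set (Mech N S (C0 m) (C m)))
    (gamhat : MechProfile M N S C0 C) (xA : AgentComm M N S C0 C)
    (x0 : PrinComm M N S C0 C) (sig : ActStrat M N S C0 C) : Prop :=
  ∀ (m : M), ∀ gm ∈ Gam m,
    V G (Function.update gamhat m gm) xA x0 sig m ≤ V G gamhat xA x0 sig m

/-- Γ-equilibrium. -/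
def GammaEq (G : M → (∀ n, S n) → ℝ) (F : ∀ n : N, S n → ℝ)
    (Gam : ∀ m : M, Set (Mech N S (C0 m) (C m))) (gamhat : MechProfile M N S C0 C)
    (xA : AgentComm M N S C0 C) (x0 : PrinComm M N S C0 C)
    (sig : ActStrat M N S C0 C) : Prop :=
  (∀ m, gamhat m ∈ Gam m) ∧ ActOpt F sig ∧ MsgOpt F sig xA x0 ∧
    SelfOpt G Gam gamhat xA x0 sig ∧ MechOpt G Gam gamhat xA x0 sig

/-- The set `Ŝ(t)` of agents' jointly optimal action profiles given transfer schedules. -/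
def Shat (F : ∀ n : N, S n → ℝ) (t : M → Sched N S) : Set (∀ n, S n) :=
  {s | ∀ (n : N) (s' : S n),
    F n s' + ∑ m, (t m n s' : ℝ) ≤ F n (s n) + ∑ m, (t m n (s n) : ℝ)}

/-- Principal `m`'s worst net payoff over agents' optimal action profiles. -/
def worst (G : M → (∀ n, S n) → ℝ) (F : ∀ n : N, S n → ℝ) (m : M)
    (t : M → Sched N S) : ℝ :=
  sInf ((fun s => G m s - ∑ n, (t m n (s n) : ℝ)) '' Shat F t)

/-- The inner supremum over principal `m`'s own transfer schedules, the other
principals' schedules being fixed. -/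
def innerSup (G : M → (∀ n, S n) → ℝ) (F : ∀ n : N, S n → ℝ) (m : M)
    (t : M → Sched N S) : ℝ :=
  sSup {v | ∃ tm : Sched N S, v = worst G F m (Function.update t m tm)}

/-- Principal `m`'s minmax value `V̲^m`. -/
def minmax (G : M → (∀ n, S n) → ℝ) (F : ∀ n : N, S n → ℝ) (m : M) : ℝ :=
  sInf {v | ∃ t : M → Sched N S, v = innerSup G F m t}

/-- Agent maximization. -/
def AM (F : ∀ n : N, S n → ℝ) (s : ∀ n, S n) (d : M → N → NNReal) : Prop :=
  ∃ t : M → Sched N S, s ∈ Shat F t ∧ ∀ m n, d m n = t m n (s n)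

/-- Principal individual rationality. -/
def PIR (G : M → (∀ n, S n) → ℝ) (F : ∀ n : N, S n → ℝ) (s : ∀ n, S n)
    (d : M → N → NNReal) : Prop :=
  ∀ m : M, minmax G F m ≤ G m s - ∑ n, (d m n : ℝ)

/-- The constant mechanism that assigns the schedules `w` regardless of messages. -/
def constMech {Com0 : Type*} {Com : N → Type*} (w : Sched N S) :
    Mech N S Com0 Com :=
  fun n _ => w n

/-- The profile of mechanisms in which principal `m` offers `gm` while every other
principal `j ≠ m` offers the constant mechanism assigning the punishment schedules
`t̃^{j,m} = ttil m j`. -/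
def punProfile (ttil : M → M → Sched N S) (m : M) (gm : Mech N S (C0 m) (C m)) :
    MechProfile M N S C0 C :=
  Function.update (fun j => constMech (ttil m j)) m gm

/-- A mechanism of principal `m` is flexible if its assigned transfer schedules are
independent of the agents' messages and its range over the principal's own messages is
all of `T^m`. -/
def Flexible {m : M} (gm : Mech N S (C0 m) (C m)) : Prop :=
  (∀ (n : N) (c0 : C0 m) (ca ca' : ∀ i : N, C m i), gm n (c0, ca) = gm n (c0, ca')) ∧
  ∀ tm : Sched N S, ∃ c0 : C0 m, ∀ (n : N) (ca : ∀ i : N, C m i), gm n (c0, ca) = tm n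

/-- The DRM-like mechanism of principal `m` constructed from injections
`φ n : M ∪ {0} → C m n`: it assigns the punishment schedules `tp j` if some `j ≠ m` is
reported by strictly more than `N/2` agents, the zero schedules if two distinct reports
`≠ m` are each sent by exactly `N/2` agents, and the no-deviation schedules `tb`
otherwise, independently of the principal's own message. -/
def drmLike (m : M) (phi : ∀ n : N, Option M → C m n) (tb : Sched N S)
    (tp : M → Sched N S) : Mech N S (C0 m) (C m) :=
  fun n c =>
    if h : ∃ j : M, j ≠ m ∧
        Fintype.card N < 2 * (Finset.univ.filter fun i => c.2 i = phi i (some j)).card then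
      tp h.choose n
    else if ∃ v v' : Option M, v ≠ v' ∧ v ≠ some m ∧ v' ≠ some m ∧
        2 * (Finset.univ.filter fun i => c.2 i = phi i v).card = Fintype.card N ∧
        2 * (Finset.univ.filter fun i => c.2 i = phi i v').card = Fintype.card N then
      fun _ => 0
    else tb n

/-- The game relative to `Γ` is regular: (i) each agent's message set for each
principal is at least as large as `M ∪ {0}`; (ii) there exist communication strategies
satisfying the agents' message-optimality and the principals' self-message-optimality
conditions, such that each principal's self-message is also optimal against the
punishment profile `(γ^m, γ̃^{-m})`, where the agents' action strategy selects, after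
`(γ^m, γ̃^{-m})` and any resulting schedules `(t^m, t̃^{-m,m})`, a profile in
`Ŝ(t^m, t̃^{-m,m})` minimizing principal `m`'s net payoff. -/
def Regular (G : M → (∀ n, S n) → ℝ) (F : ∀ n : N, S n → ℝ)
    (Gam : ∀ m : M, Set (Mech N S (C0 m) (C m))) (ttil : M → M → Sched N S) : Prop :=
  (∀ (m : M) (n : N), ∃ phi : Option M → C m n, Function.Injective phi) ∧
  ∃ (xA : AgentComm M N S C0 C) (x0 : PrinComm M N S C0 C) (sig : ActStrat M N S C0 C),
    ActOpt F sig ∧ MsgOpt F sig xA x0 ∧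
    (∀ gamhat : MechProfile M N S C0 C, SelfOpt G Gam gamhat xA x0 sig) ∧
    (∀ (m : M), ∀ gm ∈ Gam m, ∀ c0 : C0 m,
      prinPayoffAt G (punProfile ttil m gm) xA x0 sig m c0 ≤
        prinPayoffAt G (punProfile ttil m gm) xA x0 sig m (x0 m gm)) ∧
    (∀ (m : M), ∀ gm ∈ Gam m, ∀ (cn : ∀ n : N, ∀ m' : M, C m' n) (tm : Sched N S),
      ∀ s' ∈ Shat F (Function.update (ttil m) m tm),
        G m (fun n => sig n (punProfile ttil m gm) (cn n) (Function.update (ttil m) m tm)) -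
            ∑ n, (tm n (sig n (punProfile ttil m gm) (cn n)
              (Function.update (ttil m) m tm)) : ℝ) ≤
          G m s' - ∑ n, (tm n (s' n) : ℝ))


/-! ### Auxiliary lemmas -/

section Aux

variable (G : M → (∀ n, S n) → ℝ) (F : ∀ n : N, S n → ℝ)

lemma shat_nonempty (t : M → Sched N S) : (Shat (M := M) F t).Nonempty := by
  have : ∀ n, ∃ a : S n, ∀ b, F n b + ∑ m, (t m n b : ℝ) ≤ F n a + ∑ m, (t m n a : ℝ) := by
    intro n
    obtain ⟨a, ha⟩ := Finite.exists_max (fun a : S n => F n a + ∑ m, (t m n a : ℝ))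
    exact ⟨a, ha⟩
  choose f hf using this
  exact ⟨f, fun n s' => hf n s'⟩

lemma mem_shat {sig : ActStrat M N S C0 C} (hAct : ActOpt F sig)
    (gam : MechProfile M N S C0 C) (cn : ∀ n : N, ∀ m : M, C m n) (t : M → Sched N S) :
    (fun n => sig n gam (cn n) t) ∈ Shat (M := M) F t :=
  fun n s' => hAct n gam (cn n) t s'

lemma worst_le (m : M) (t : M → Sched N S) {s0 : ∀ n, S n} (h : s0 ∈ Shat (M := M) F t) :
    worst G F m t ≤ G m s0 - ∑ n, (t m n (s0 n) : ℝ) :=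
  csInf_le (Set.Finite.bddBelow ((Set.toFinite (Shat (M := M) F t)).image _)) ⟨s0, h, rfl⟩

lemma le_worst (m : M) (t : M → Sched N S) (b : ℝ)
    (hb : ∀ s0 ∈ Shat (M := M) F t, b ≤ G m s0 - ∑ n, (t m n (s0 n) : ℝ)) :
    b ≤ worst G F m t := by
  refine le_csInf ((shat_nonempty F t).image _) ?_
  rintro v ⟨s0, h, rfl⟩
  exact hb s0 h

lemma bddAbove_innerSet (m : M) (tbase : M → Sched N S) :
    BddAbove {v | ∃ tm : Sched N S, v = worst G F m (Function.update tbase m tm)} := by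
  have : Nonempty (∀ n, S n) := ⟨fun n => Classical.arbitrary _⟩
  obtain ⟨smax, hmax⟩ := Finite.exists_max (G m)
  refine ⟨G m smax, ?_⟩
  rintro v ⟨tm, rfl⟩
  obtain ⟨s0, hs0⟩ := shat_nonempty (M := M) F (Function.update tbase m tm)
  refine le_trans (worst_le G F m _ hs0) (le_trans ?_ (hmax s0))
  have : (0:ℝ) ≤ ∑ n, ((Function.update tbase m tm) m n (s0 n) : ℝ) :=
    Finset.sum_nonneg fun n _ => NNReal.coe_nonneg _
  linarith

lemma worst_le_innerSup (m : M) (tbase : M → Sched N S) (tm : Sched N S) :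
    worst G F m (Function.update tbase m tm) ≤ innerSup G F m tbase :=
  le_csSup (bddAbove_innerSet G F m tbase) ⟨tm, rfl⟩

lemma lb_innerSup (m : M) : ∃ b : ℝ, ∀ tbase : M → Sched N S, b ≤ innerSup G F m tbase := by
  have : Nonempty (∀ n, S n) := ⟨fun n => Classical.arbitrary _⟩
  obtain ⟨smin, hmin⟩ := Finite.exists_min (G m)
  refine ⟨G m smin, fun tbase => ?_⟩
  refine le_trans ?_ (worst_le_innerSup G F m tbase (fun _ _ => 0))
  refine le_worst G F m _ _ (fun s0 _ => ?_)
  have h1 : ∀ n : N, ((Function.update tbase m (fun _ _ => (0:NNReal)) : M → Sched N S) m n (s0 n) : ℝ) = 0 := by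
    intro n; erw [Function.update_self]; exact NNReal.coe_zero
  rw [Finset.sum_congr rfl (fun n _ => h1 n)]
  simpa using hmin s0

lemma minmax_le_innerSup (m : M) (tbase : M → Sched N S) :
    minmax G F m ≤ innerSup G F m tbase := by
  obtain ⟨b, hb⟩ := lb_innerSup G F m
  refine csInf_le ⟨b, ?_⟩ ⟨tbase, rfl⟩
  rintro v ⟨t', rfl⟩
  exact hb t'

end Aux

section Defs

/-- Unfolding lemma for `agentPayoff`. -/
lemma agentPayoff_def (F : ∀ n : N, S n → ℝ) (sig : ActStrat M N S C0 C)
    (gam : MechProfile M N S C0 C) (xA : AgentComm M N S C0 C)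
    (x0 : PrinComm M N S C0 C) (n : N) (cn : ∀ m : M, C m n) (u : M → Sched N S)
    (hu : (fun (m : M) (i : N) =>
        gam m i (x0 m (gam m), Function.update (fun j => xA j gam m) n (cn m))) = u) :
    agentPayoff F sig gam xA x0 n cn =
      F n (sig n gam cn u) + ∑ m, (u m n (sig n gam cn u) : ℝ) := by
  subst hu; rfl

/-- Unfolding lemma for `prinPayoffAt`. -/
lemma prinPayoffAt_def (G : M → (∀ n, S n) → ℝ) (gam : MechProfile M N S C0 C)
    (xA : AgentComm M N S C0 C) (x0 : PrinComm M N S C0 C)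
    (sig : ActStrat M N S C0 C) (m : M) (c0 : C0 m) (u : M → Sched N S)
    (hu : Function.update (assigned gam xA x0) m
        (fun i => gam m i (c0, fun j => xA j gam m)) = u) :
    prinPayoffAt G gam xA x0 sig m c0 =
      G m (fun n => sig n gam (xA n gam) u) -
        ∑ n, (u m n (sig n gam (xA n gam) u) : ℝ) := by
  subst hu; rfl

/-- Unfolding lemma for `V`. -/
lemma V_def (G : M → (∀ n, S n) → ℝ) (gam : MechProfile M N S C0 C)
    (xA : AgentComm M N S C0 C) (x0 : PrinComm M N S C0 C)
    (sig : ActStrat M N S C0 C) (m : M) (u : M → Sched N S)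
    (hu : assigned gam xA x0 = u) :
    V G gam xA x0 sig m =
      G m (fun n => sig n gam (xA n gam) u) -
        ∑ n, (u m n (sig n gam (xA n gam) u) : ℝ) := by
  subst hu; rfl

/-- The unanimity mechanism: if all agents report a deviator `j' ≠ j`, pay the
punishment schedule; if all report no deviation, pay `tb`; otherwise pay zero. -/
def myMech (j : M) (phi : ∀ n : N, Option M → C j n) (tb : Sched N S)
    (tp : M → Sched N S) : Mech N S (C0 j) (C j) :=
  fun n c =>
    if h : ∃ j' : M, j' ≠ j ∧ ∀ i, c.2 i = phi i (some j') then tp h.choose n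
    else if ∀ i, c.2 i = phi i none then tb n
    else fun _ => 0

lemma myMech_none (j : M) (phi : ∀ n : N, Option M → C j n) (tb : Sched N S)
    (tp : M → Sched N S) (hinj : ∀ i, Function.Injective (phi i)) [Nonempty N]
    (n : N) (c0 : C0 j) (ms : ∀ i : N, C j i) (hms : ∀ i, ms i = phi i none) :
    myMech j phi tb tp n (c0, ms) = tb n := by
  unfold myMech
  rw [dif_neg, if_pos hms]
  rintro ⟨j', -, hall⟩
  have i := Classical.arbitrary N
  exact Option.some_ne_none _ (hinj i ((hall i).symm.trans (hms i)))

lemma myMech_some (j : M) (phi : ∀ n : N, Option M → C j n) (tb : Sched N S)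
    (tp : M → Sched N S) (hinj : ∀ i, Function.Injective (phi i)) [Nonempty N]
    (n : N) (c0 : C0 j) (ms : ∀ i : N, C j i) {m : M} (hmj : m ≠ j)
    (hms : ∀ i, ms i = phi i (some m)) :
    myMech j phi tb tp n (c0, ms) = tp m n := by
  have hex : ∃ j' : M, j' ≠ j ∧ ∀ i, ms i = phi i (some j') := ⟨m, hmj, hms⟩
  unfold myMech
  rw [dif_pos hex]
  have i := Classical.arbitrary N
  have hc : hex.choose = m :=
    Option.some_injective _ (hinj i ((hex.choose_spec.2 i).symm.trans (hms i)))
  rw [hc]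

lemma myMech_le_none (j : M) (phi : ∀ n : N, Option M → C j n) (tb : Sched N S)
    (tp : M → Sched N S) (hinj : ∀ i, Function.Injective (phi i))
    (n0 : N) (c0 : C0 j) (ms : ∀ i : N, C j i)
    (hms : ∀ i, i ≠ n0 → ms i = phi i none) (hex : ∃ i : N, i ≠ n0) :
    ∀ a, myMech j phi tb tp n0 (c0, ms) a ≤ tb n0 a := by
  intro a
  unfold myMech
  rw [dif_neg]
  · split_ifs
    · exact le_refl _
    · exact zero_le
  · rintro ⟨j', -, hall⟩
    obtain ⟨i, hi⟩ := hex
    exact Option.some_ne_none _ (hinj i ((hall i).symm.trans (hms i hi)))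

lemma myMech_le_some (j : M) (phi : ∀ n : N, Option M → C j n) (tb : Sched N S)
    (tp : M → Sched N S) (hinj : ∀ i, Function.Injective (phi i))
    (n0 : N) (c0 : C0 j) (ms : ∀ i : N, C j i) {m : M} (hmj : m ≠ j)
    (hms : ∀ i, i ≠ n0 → ms i = phi i (some m)) (hex : ∃ i : N, i ≠ n0) :
    ∀ a, myMech j phi tb tp n0 (c0, ms) a ≤ tp m n0 a := by
  intro a
  unfold myMech
  by_cases h : ∃ j' : M, j' ≠ j ∧ ∀ i, ms i = phi i (some j')
  · rw [dif_pos h]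
    obtain ⟨i, hi⟩ := hex
    have hc : h.choose = m :=
      Option.some_injective _ (hinj i ((h.choose_spec.2 i).symm.trans (hms i hi)))
    rw [hc]
  · rw [dif_neg h, if_neg]
    · exact zero_le
    · intro hall
      obtain ⟨i, hi⟩ := hex
      exact Option.some_ne_none _ (hinj i ((hms i hi).symm.trans (hall i)))

lemma update_ne_self {gamhat : MechProfile M N S C0 C} {m : M}
    {gm : Mech N S (C0 m) (C m)} (hgm : gm ≠ gamhat m) :
    Function.update gamhat m gm ≠ gamhat := by
  intro h
  have := congrFun h m
  rw [Function.update_self] at this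
  exact hgm this

lemma dev_exists (gamhat : MechProfile M N S C0 C) (m : M) (gm : Mech N S (C0 m) (C m)) :
    ∃ m', Function.update gamhat m gm =
      Function.update gamhat m' (Function.update gamhat m gm m') :=
  ⟨m, by rw [Function.update_self]⟩

lemma dev_choose {gamhat : MechProfile M N S C0 C} {m : M}
    {gm : Mech N S (C0 m) (C m)} (hgm : gm ≠ gamhat m)
    (h : ∃ m', Function.update gamhat m gm =
      Function.update gamhat m' (Function.update gamhat m gm m')) : h.choose = m := by
  by_contra hne
  have hspec := h.choose_spec
  have h2 := congrFun hspec m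
  rw [Function.update_self, Function.update_of_ne (Ne.symm hne)] at h2
  exact hgm h2

/-- The DRM-like equilibrium mechanism profile. -/
def hatProf (phi : ∀ (m : M) (n : N), Option M → C m n) (t : M → Sched N S)
    (ttil : M → M → Sched N S) : MechProfile M N S C0 C :=
  fun j => myMech j (phi j) (t j) (fun m' => ttil m' j)

/-- The equilibrium communication strategies of the agents. -/
def xAstar (gamhat : MechProfile M N S C0 C) (phi : ∀ (m : M) (n : N), Option M → C m n)
    (ttil : M → M → Sched N S) (xA : AgentComm M N S C0 C) : AgentComm M N S C0 C :=
  fun n gam m' =>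
    if gam = gamhat then phi m' n none
    else if h : ∃ m, gam = Function.update gamhat m (gam m) then
      (if m' = h.choose then xA n (punProfile ttil h.choose (gam h.choose)) m'
       else phi m' n (some h.choose))
    else xA n gam m'

/-- The equilibrium action strategies of the agents. -/
def sigstar (gamhat : MechProfile M N S C0 C) (t : M → Sched N S) (s : ∀ n, S n)
    (ttil : M → M → Sched N S) (sig : ActStrat M N S C0 C) : ActStrat M N S C0 C :=
  fun n gam cn tt =>
    if gam = gamhat then (if tt = t then s n else sig n gam cn tt)
    else if h : ∃ m, gam = Function.update gamhat m (gam m) then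
      sig n (punProfile ttil h.choose (gam h.choose)) cn tt
    else sig n gam cn tt

lemma xAstar_hat (gamhat : MechProfile M N S C0 C) (phi : ∀ (m : M) (n : N), Option M → C m n)
    (ttil : M → M → Sched N S) (xA : AgentComm M N S C0 C) (n : N) (m' : M) :
    xAstar gamhat phi ttil xA n gamhat m' = phi m' n none := if_pos rfl

lemma xAstar_dev (gamhat : MechProfile M N S C0 C) (phi : ∀ (m : M) (n : N), Option M → C m n)
    (ttil : M → M → Sched N S) (xA : AgentComm M N S C0 C) (n : N) (m' : M)
    {m : M} {gm : Mech N S (C0 m) (C m)} (hgm : gm ≠ gamhat m) :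
    xAstar gamhat phi ttil xA n (Function.update gamhat m gm) m' =
      if m' = m then xA n (punProfile ttil m gm) m' else phi m' n (some m) := by
  unfold xAstar
  rw [if_neg (update_ne_self hgm), dif_pos (dev_exists gamhat m gm),
    dev_choose hgm (dev_exists gamhat m gm), Function.update_self]

lemma sigstar_hat (gamhat : MechProfile M N S C0 C) (t : M → Sched N S) (s : ∀ n, S n)
    (ttil : M → M → Sched N S) (sig : ActStrat M N S C0 C) (n : N) (cn : ∀ m : M, C m n) :
    sigstar gamhat t s ttil sig n gamhat cn t = s n := by
  unfold sigstar
  rw [if_pos rfl, if_pos rfl]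

lemma sigstar_hat' (gamhat : MechProfile M N S C0 C) (t : M → Sched N S) (s : ∀ n, S n)
    (ttil : M → M → Sched N S) (sig : ActStrat M N S C0 C) (n : N) (cn : ∀ m : M, C m n)
    (tt : M → Sched N S) :
    sigstar gamhat t s ttil sig n gamhat cn tt =
      if tt = t then s n else sig n gamhat cn tt := if_pos rfl

lemma sigstar_dev (gamhat : MechProfile M N S C0 C) (t : M → Sched N S) (s : ∀ n, S n)
    (ttil : M → M → Sched N S) (sig : ActStrat M N S C0 C) (n : N) (cn : ∀ m : M, C m n)
    (tt : M → Sched N S) {m : M} {gm : Mech N S (C0 m) (C m)} (hgm : gm ≠ gamhat m) :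
    sigstar gamhat t s ttil sig n (Function.update gamhat m gm) cn tt =
      sig n (punProfile ttil m gm) cn tt := by
  unfold sigstar
  rw [if_neg (update_ne_self hgm), dif_pos (dev_exists gamhat m gm),
    dev_choose hgm (dev_exists gamhat m gm), Function.update_self]

lemma xAstar_other (gamhat : MechProfile M N S C0 C) (phi : ∀ (m : M) (n : N), Option M → C m n)
    (ttil : M → M → Sched N S) (xA : AgentComm M N S C0 C) (n : N) (m' : M)
    {gam : MechProfile M N S C0 C} (h1 : gam ≠ gamhat)
    (h2 : ¬ ∃ m, gam = Function.update gamhat m (gam m)) :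
    xAstar gamhat phi ttil xA n gam m' = xA n gam m' := by
  unfold xAstar
  rw [if_neg h1, dif_neg h2]

lemma sigstar_other (gamhat : MechProfile M N S C0 C) (t : M → Sched N S) (s : ∀ n, S n)
    (ttil : M → M → Sched N S) (sig : ActStrat M N S C0 C) (n : N) (cn : ∀ m : M, C m n)
    (tt : M → Sched N S) {gam : MechProfile M N S C0 C} (h1 : gam ≠ gamhat)
    (h2 : ¬ ∃ m, gam = Function.update gamhat m (gam m)) :
    sigstar gamhat t s ttil sig n gam cn tt = sig n gam cn tt := by
  unfold sigstar
  rw [if_neg h1, dif_neg h2]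

end Defs


/-! ### Backward-direction construction lemmas -/

section Back

variable (G : M → (∀ n, S n) → ℝ) (F : ∀ n : N, S n → ℝ)
variable (ttil : M → M → Sched N S) (t : M → Sched N S) (s : ∀ n, S n)
variable (phi : ∀ (m : M) (n : N), Option M → C m n)
variable (xA : AgentComm M N S C0 C) (x0 : PrinComm M N S C0 C) (sig : ActStrat M N S C0 C)
variable (gamhat : MechProfile M N S C0 C)

/-- Behavior of `gamhat` under unanimous no-deviation reports. -/
def HNone (gamhat : MechProfile M N S C0 C) : Prop :=
  ∀ (m' : M) (n : N) (c0 : C0 m') (ms : ∀ i : N, C m' i),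
    (∀ i, ms i = phi m' i none) → gamhat m' n (c0, ms) = t m' n

/-- Behavior of `gamhat` when all but one agent reports no deviation. -/
def HNoneLe (gamhat : MechProfile M N S C0 C) : Prop :=
  ∀ (m' : M) (n : N) (c0 : C0 m') (ms : ∀ i : N, C m' i),
    (∀ i, i ≠ n → ms i = phi m' i none) → ∀ a, gamhat m' n (c0, ms) a ≤ t m' n a

/-- Behavior of `gamhat` under unanimous reports of deviator `m`. -/
def HSome (gamhat : MechProfile M N S C0 C) : Prop :=
  ∀ (m' : M) (n : N) (c0 : C0 m') (ms : ∀ i : N, C m' i) (m : M), m ≠ m' →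
    (∀ i, ms i = phi m' i (some m)) → gamhat m' n (c0, ms) = ttil m m' n

/-- Behavior of `gamhat` when all but one agent reports deviator `m`. -/
def HSomeLe (gamhat : MechProfile M N S C0 C) : Prop :=
  ∀ (m' : M) (n : N) (c0 : C0 m') (ms : ∀ i : N, C m' i) (m : M), m ≠ m' →
    (∀ i, i ≠ n → ms i = phi m' i (some m)) → ∀ a, gamhat m' n (c0, ms) a ≤ ttil m m' n a

lemma punProfile_apply_self (m : M) (gm : Mech N S (C0 m) (C m)) :
    punProfile ttil m gm m = gm := by
  unfold punProfile; exact Function.update_self _ _ _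

lemma punProfile_apply_ne (m : M) (gm : Mech N S (C0 m) (C m)) {m' : M} (h : m' ≠ m) :
    punProfile (C0 := C0) (C := C) ttil m gm m' = constMech (ttil m m') := by
  unfold punProfile; exact Function.update_of_ne h _ _

lemma assigned_apply (gam : MechProfile M N S C0 C) (xAa : AgentComm M N S C0 C)
    (x0a : PrinComm M N S C0 C) (m : M) (n : N) :
    assigned gam xAa x0a m n = gam m n (x0a m (gam m), fun i => xAa i gam m) := rfl

lemma assigned_hat (Hn : HNone t phi gamhat) :
    assigned gamhat (xAstar gamhat phi ttil xA) x0 = t := by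
  funext m' n
  exact Hn m' n _ _ (fun i => xAstar_hat gamhat phi ttil xA i m')

lemma assigned_pun (m : M) (gm : Mech N S (C0 m) (C m)) :
    assigned (punProfile ttil m gm) xA x0 =
      Function.update (ttil m) m (assigned (punProfile ttil m gm) xA x0 m) := by
  funext m'
  by_cases hm : m' = m
  · subst hm; rw [Function.update_self]
  · rw [Function.update_of_ne hm]
    funext n
    rw [assigned_apply, punProfile_apply_ne ttil m gm hm]
    rfl

lemma assigned_dev (Hs : HSome ttil phi gamhat) {m : M} {gm : Mech N S (C0 m) (C m)}
    (hgm : gm ≠ gamhat m) :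
    assigned (Function.update gamhat m gm) (xAstar gamhat phi ttil xA) x0 =
      Function.update (ttil m) m (assigned (punProfile ttil m gm) xA x0 m) := by
  funext m'
  by_cases hm : m' = m
  · subst hm
    rw [Function.update_self]
    funext n
    rw [assigned_apply, assigned_apply, Function.update_self, punProfile_apply_self]
    have hmsg : (fun i => xAstar gamhat phi ttil xA i (Function.update gamhat m' gm) m') =
        fun i => xA i (punProfile ttil m' gm) m' := by
      funext i
      rw [xAstar_dev gamhat phi ttil xA i m' hgm, if_pos rfl]
    rw [hmsg]
  · rw [Function.update_of_ne hm]
    funext n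
    rw [assigned_apply]
    have hg : Function.update gamhat m gm m' = gamhat m' := Function.update_of_ne hm _ _
    rw [hg]
    refine Hs m' n _ _ m (Ne.symm hm) (fun i => ?_)
    rw [xAstar_dev gamhat phi ttil xA i m' hgm, if_neg hm]

lemma actopt_star (hAct : ActOpt F sig) (hs : s ∈ Shat (M := M) F t) :
    ActOpt F (sigstar gamhat t s ttil sig) := by
  intro n gam cn tt s'
  by_cases h1 : gam = gamhat
  · subst h1
    rw [sigstar_hat']
    by_cases h2 : tt = t
    · rw [if_pos h2]; subst h2; exact hs n s'
    · rw [if_neg h2]; exact hAct n _ cn tt s'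
  · by_cases h2 : ∃ m, gam = Function.update gamhat m (gam m)
    · unfold sigstar
      rw [if_neg h1, dif_pos h2]
      exact hAct n _ cn tt s'
    · rw [sigstar_other gamhat t s ttil sig n cn tt h1 h2]
      exact hAct n _ cn tt s'

lemma act_hat (Hn : HNone t phi gamhat) :
    act gamhat (xAstar gamhat phi ttil xA) x0 (sigstar gamhat t s ttil sig) = s := by
  funext n
  show sigstar gamhat t s ttil sig n gamhat (xAstar gamhat phi ttil xA n gamhat)
      (assigned gamhat (xAstar gamhat phi ttil xA) x0) = s n
  rw [assigned_hat ttil t phi xA x0 gamhat Hn]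
  exact sigstar_hat _ _ _ _ _ _ _

lemma V_hat (Hn : HNone t phi gamhat) (m : M) :
    V G gamhat (xAstar gamhat phi ttil xA) x0 (sigstar gamhat t s ttil sig) m =
      G m s - ∑ n, (t m n (s n) : ℝ) := by
  rw [V_def G gamhat _ x0 _ m t (assigned_hat ttil t phi xA x0 gamhat Hn)]
  have hs' : ∀ n, sigstar gamhat t s ttil sig n gamhat (xAstar gamhat phi ttil xA n gamhat) t
      = s n := fun n => sigstar_hat _ _ _ _ _ _ _
  simp only [hs']

lemma prinPayoff_hat (Hn : HNone t phi gamhat) (m : M) (c0 : C0 m) :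
    prinPayoffAt G gamhat (xAstar gamhat phi ttil xA) x0 (sigstar gamhat t s ttil sig) m c0 =
      G m s - ∑ n, (t m n (s n) : ℝ) := by
  have hu : Function.update (assigned gamhat (xAstar gamhat phi ttil xA) x0) m
      (fun i => gamhat m i (c0, fun j => xAstar gamhat phi ttil xA j gamhat m)) = t := by
    rw [assigned_hat ttil t phi xA x0 gamhat Hn]
    have h1 : (fun i => gamhat m i (c0, fun j => xAstar gamhat phi ttil xA j gamhat m)) = t m := by
      funext i
      exact Hn m i c0 _ (fun j => xAstar_hat gamhat phi ttil xA j m)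
    rw [h1, Function.update_eq_self]
  rw [prinPayoffAt_def G gamhat _ x0 _ m c0 t hu]
  have hs' : ∀ n, sigstar gamhat t s ttil sig n gamhat (xAstar gamhat phi ttil xA n gamhat) t
      = s n := fun n => sigstar_hat _ _ _ _ _ _ _
  simp only [hs']


lemma msgopt_hat (Hn : HNone t phi gamhat) (HnL : HNoneLe t phi gamhat)
    (hexne : ∀ n0 : N, ∃ i : N, i ≠ n0) (hs : s ∈ Shat (M := M) F t)
    (n : N) (cn : ∀ m' : M, C m' n) :
    agentPayoff F (sigstar gamhat t s ttil sig) gamhat (xAstar gamhat phi ttil xA) x0 n cn ≤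
      agentPayoff F (sigstar gamhat t s ttil sig) gamhat (xAstar gamhat phi ttil xA) x0 n
        (xAstar gamhat phi ttil xA n gamhat) := by
  have hassh := assigned_hat ttil t phi xA x0 gamhat Hn
  have hRu : (fun (m' : M) (i : N) => gamhat m' i (x0 m' (gamhat m'),
      Function.update (fun j => xAstar gamhat phi ttil xA j gamhat m') n
        (xAstar gamhat phi ttil xA n gamhat m'))) = t := by
    funext m'
    rw [Function.update_eq_self]
    exact congrFun hassh m'
  rw [agentPayoff_def F _ gamhat _ x0 n _ t hRu, sigstar_hat]
  set u : M → Sched N S := fun m' i => gamhat m' i (x0 m' (gamhat m'),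
      Function.update (fun j => xAstar gamhat phi ttil xA j gamhat m') n (cn m')) with hu
  rw [agentPayoff_def F _ gamhat _ x0 n cn u hu.symm]
  refine le_trans ?_ (hs n (sigstar gamhat t s ttil sig n gamhat cn u))
  refine add_le_add_right (Finset.sum_le_sum fun m' _ => ?_) _
  have h := HnL m' n (x0 m' (gamhat m'))
      (Function.update (fun j => xAstar gamhat phi ttil xA j gamhat m') n (cn m'))
      (fun i hi => by rw [Function.update_of_ne hi]; exact xAstar_hat gamhat phi ttil xA i m')
      (sigstar gamhat t s ttil sig n gamhat cn u)
  have hu' : u m' n (sigstar gamhat t s ttil sig n gamhat cn u) =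
      gamhat m' n (x0 m' (gamhat m'),
        Function.update (fun j => xAstar gamhat phi ttil xA j gamhat m') n (cn m'))
        (sigstar gamhat t s ttil sig n gamhat cn u) := by rw [hu]
  rw [hu']
  exact_mod_cast h

lemma msgopt_dev (Hs : HSome ttil phi gamhat) (HsL : HSomeLe ttil phi gamhat)
    (hexne : ∀ n0 : N, ∃ i : N, i ≠ n0) (hAct : ActOpt F sig) (hMsg : MsgOpt F sig xA x0)
    {m : M} {gm : Mech N S (C0 m) (C m)} (hgm : gm ≠ gamhat m)
    (n : N) (cn : ∀ m' : M, C m' n) :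
    agentPayoff F (sigstar gamhat t s ttil sig) (Function.update gamhat m gm)
        (xAstar gamhat phi ttil xA) x0 n cn ≤
      agentPayoff F (sigstar gamhat t s ttil sig) (Function.update gamhat m gm)
        (xAstar gamhat phi ttil xA) x0 n
        (xAstar gamhat phi ttil xA n (Function.update gamhat m gm)) := by
  have hgamdm : Function.update gamhat m gm m = gm := Function.update_self _ _ _
  have hmsgm : (fun j => xAstar gamhat phi ttil xA j (Function.update gamhat m gm) m) =
      (fun j => xA j (punProfile ttil m gm) m) := by
    funext j
    rw [xAstar_dev gamhat phi ttil xA j m hgm, if_pos rfl]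
  have hassdev := assigned_dev ttil phi xA x0 gamhat Hs hgm
  have hasspun := assigned_pun ttil xA x0 m gm
  -- the schedules induced by the deviation `cn`
  set u : M → Sched N S := fun m' i => Function.update gamhat m gm m' i
      (x0 m' (Function.update gamhat m gm m'),
        Function.update (fun j => xAstar gamhat phi ttil xA j (Function.update gamhat m gm) m')
          n (cn m')) with hudef
  set tmc : Sched N S := fun i => gm i (x0 m gm,
      Function.update (fun j => xA j (punProfile ttil m gm) m) n (cn m)) with htmc
  set w : M → Sched N S := Function.update (ttil m) m tmc with hw
  set w2 : M → Sched N S :=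
      Function.update (ttil m) m (assigned (punProfile ttil m gm) xA x0 m) with hw2
  have hum : u m = tmc := by
    funext i
    rw [hudef, htmc]
    simp only []
    rw [hgamdm, hmsgm]
  have hule : ∀ m', m' ≠ m → ∀ a, u m' n a ≤ ttil m m' n a := by
    intro m' hm' a
    have hgd : Function.update gamhat m gm m' = gamhat m' := Function.update_of_ne hm' _ _
    have hu' : u m' n a = gamhat m' n (x0 m' (gamhat m'),
        Function.update (fun j => xAstar gamhat phi ttil xA j (Function.update gamhat m gm) m')
          n (cn m')) a := by rw [hudef]; simp only []; rw [hgd]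
    rw [hu']
    refine HsL m' n _ _ m (Ne.symm hm') (fun i hi => ?_) a
    rw [Function.update_of_ne hi, xAstar_dev gamhat phi ttil xA i m' hgm, if_neg hm']
  -- rewrite the left-hand side
  rw [agentPayoff_def F _ (Function.update gamhat m gm) _ x0 n cn u hudef.symm]
  have haeq : sigstar gamhat t s ttil sig n (Function.update gamhat m gm) cn u =
      sig n (punProfile ttil m gm) cn u := sigstar_dev gamhat t s ttil sig n cn u hgm
  rw [haeq]
  set a : S n := sig n (punProfile ttil m gm) cn u with hadef
  -- step 1 : dominated by the punishment schedules with `m`-component tmc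
  have hstep1 : F n a + ∑ m', (u m' n a : ℝ) ≤ F n a + ∑ m', (w m' n a : ℝ) := by
    refine add_le_add_right (Finset.sum_le_sum fun m' _ => ?_) _
    by_cases hm' : m' = m
    · subst hm'
      rw [hw, Function.update_self, hum]
    · rw [hw, Function.update_of_ne hm']
      exact_mod_cast hule m' hm' a
  -- step 2 : dominated by the optimal action against `w`
  have hstep2 : F n a + ∑ m', (w m' n a : ℝ) ≤
      F n (sig n (punProfile ttil m gm) cn w) +
        ∑ m', (w m' n (sig n (punProfile ttil m gm) cn w) : ℝ) :=
    hAct n (punProfile ttil m gm) cn w a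
  -- step 3 : this is the deviation payoff at the punishment profile
  have hPu : (fun (m' : M) (i : N) => punProfile ttil m gm m' i
      (x0 m' (punProfile ttil m gm m'),
        Function.update (fun j => xA j (punProfile ttil m gm) m') n (cn m'))) = w := by
    funext m'
    by_cases hm' : m' = m
    · subst hm'
      rw [hw, Function.update_self]
      funext i
      rw [htmc]
      simp only []
      rw [punProfile_apply_self]
    · rw [hw, Function.update_of_ne hm']
      funext i
      rw [punProfile_apply_ne ttil m gm hm']
      rfl
  have hstep3 : agentPayoff F sig (punProfile ttil m gm) xA x0 n cn =
      F n (sig n (punProfile ttil m gm) cn w) +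
        ∑ m', (w m' n (sig n (punProfile ttil m gm) cn w) : ℝ) :=
    agentPayoff_def F sig (punProfile ttil m gm) xA x0 n cn w hPu
  -- step 4 : message optimality at the punishment profile
  have hstep4 : agentPayoff F sig (punProfile ttil m gm) xA x0 n cn ≤
      agentPayoff F sig (punProfile ttil m gm) xA x0 n (xA n (punProfile ttil m gm)) :=
    hMsg n (punProfile ttil m gm) cn
  -- step 5 : the honest payoff at the punishment profile
  have hPu2 : (fun (m' : M) (i : N) => punProfile ttil m gm m' i
      (x0 m' (punProfile ttil m gm m'),
        Function.update (fun j => xA j (punProfile ttil m gm) m') n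
          (xA n (punProfile ttil m gm) m'))) = w2 := by
    funext m'
    rw [Function.update_eq_self]
    exact congrFun hasspun m'
  have hstep5 : agentPayoff F sig (punProfile ttil m gm) xA x0 n (xA n (punProfile ttil m gm)) =
      F n (sig n (punProfile ttil m gm) (xA n (punProfile ttil m gm)) w2) +
        ∑ m', (w2 m' n (sig n (punProfile ttil m gm) (xA n (punProfile ttil m gm)) w2) : ℝ) :=
    agentPayoff_def F sig (punProfile ttil m gm) xA x0 n _ w2 hPu2
  -- step 6 : two maximizers against the same schedules give the same payoff
  set b : S n := sig n (punProfile ttil m gm) (xA n (punProfile ttil m gm)) w2 with hbdef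
  set c : S n := sig n (punProfile ttil m gm)
      (xAstar gamhat phi ttil xA n (Function.update gamhat m gm)) w2 with hcdef
  have hstep6 : F n b + ∑ m', (w2 m' n b : ℝ) = F n c + ∑ m', (w2 m' n c : ℝ) :=
    le_antisymm
      (hAct n (punProfile ttil m gm)
        (xAstar gamhat phi ttil xA n (Function.update gamhat m gm)) w2 b)
      (hAct n (punProfile ttil m gm) (xA n (punProfile ttil m gm)) w2 c)
  -- step 7 : the right-hand side equals that payoff
  have hRu : (fun (m' : M) (i : N) => Function.update gamhat m gm m' i
      (x0 m' (Function.update gamhat m gm m'),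
        Function.update
          (fun j => xAstar gamhat phi ttil xA j (Function.update gamhat m gm) m') n
          (xAstar gamhat phi ttil xA n (Function.update gamhat m gm) m'))) = w2 := by
    funext m'
    rw [Function.update_eq_self]
    exact congrFun hassdev m'
  rw [agentPayoff_def F _ (Function.update gamhat m gm) _ x0 n
    (xAstar gamhat phi ttil xA n (Function.update gamhat m gm)) w2 hRu]
  have hc' : sigstar gamhat t s ttil sig n (Function.update gamhat m gm)
      (xAstar gamhat phi ttil xA n (Function.update gamhat m gm)) w2 = c :=
    sigstar_dev gamhat t s ttil sig n _ w2 hgm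
  rw [hc']
  linarith [hstep1, hstep2, hstep3, hstep4, hstep5, hstep6]

lemma msgopt_star (Hn : HNone t phi gamhat) (HnL : HNoneLe t phi gamhat)
    (Hs : HSome ttil phi gamhat) (HsL : HSomeLe ttil phi gamhat)
    (hexne : ∀ n0 : N, ∃ i : N, i ≠ n0) (hAct : ActOpt F sig) (hMsg : MsgOpt F sig xA x0)
    (hs : s ∈ Shat (M := M) F t) :
    MsgOpt F (sigstar gamhat t s ttil sig) (xAstar gamhat phi ttil xA) x0 := by
  intro n gam cn
  by_cases h1 : gam = gamhat
  · rw [h1]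
    exact msgopt_hat F ttil t s phi xA x0 sig gamhat Hn HnL hexne hs n cn
  · by_cases h2 : ∃ m, gam = Function.update gamhat m (gam m)
    · obtain ⟨m, hspec⟩ := h2
      have hgm : gam m ≠ gamhat m := by
        intro hh
        exact h1 (by rw [hspec, hh, Function.update_eq_self])
      rw [hspec]
      exact msgopt_dev F ttil t s phi xA x0 sig gamhat Hs HsL hexne hAct hMsg hgm n cn
    · have hx : ∀ (i : N) (m' : M), xAstar gamhat phi ttil xA i gam m' = xA i gam m' :=
        fun i m' => xAstar_other gamhat phi ttil xA i m' h1 h2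
      have hsg : ∀ (n' : N) (cn' : ∀ m' : M, C m' n') (tt : M → Sched N S),
          sigstar gamhat t s ttil sig n' gam cn' tt = sig n' gam cn' tt :=
        fun n' cn' tt => sigstar_other gamhat t s ttil sig n' cn' tt h1 h2
      have hL : ∀ cn' : ∀ m' : M, C m' n,
          agentPayoff F (sigstar gamhat t s ttil sig) gam (xAstar gamhat phi ttil xA) x0 n cn' =
            agentPayoff F sig gam xA x0 n cn' := by
        intro cn'
        have hu : (fun (m' : M) (i : N) => gam m' i (x0 m' (gam m'),
            Function.update (fun j => xAstar gamhat phi ttil xA j gam m') n (cn' m'))) =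
            (fun (m' : M) (i : N) => gam m' i (x0 m' (gam m'),
            Function.update (fun j => xA j gam m') n (cn' m'))) := by
          simp only [hx]
        erw [agentPayoff_def F _ gam _ x0 n cn' _ hu, hsg,
          agentPayoff_def F sig gam xA x0 n cn' _ rfl]
      rw [hL cn, hL (xAstar gamhat phi ttil xA n gam)]
      have hxe : xAstar gamhat phi ttil xA n gam = xA n gam := funext (hx n)
      rw [hxe]
      exact hMsg n gam cn


lemma selfopt_dev_eq (Gam : ∀ m : M, Set (Mech N S (C0 m) (C m)))
    (Hs : HSome ttil phi gamhat) (hAct : ActOpt F sig)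
    (hMin : ∀ (m : M), ∀ gm ∈ Gam m, ∀ (cn : ∀ n : N, ∀ m' : M, C m' n) (tm : Sched N S),
      ∀ s' ∈ Shat F (Function.update (ttil m) m tm),
        G m (fun n => sig n (punProfile ttil m gm) (cn n) (Function.update (ttil m) m tm)) -
            ∑ n, (tm n (sig n (punProfile ttil m gm) (cn n)
              (Function.update (ttil m) m tm)) : ℝ) ≤
          G m s' - ∑ n, (tm n (s' n) : ℝ))
    {m : M} {gm : Mech N S (C0 m) (C m)} (hgm : gm ≠ gamhat m) (hgmmem : gm ∈ Gam m)
    (c0 : C0 m) :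
    prinPayoffAt G (Function.update gamhat m gm) (xAstar gamhat phi ttil xA) x0
        (sigstar gamhat t s ttil sig) m c0 =
      prinPayoffAt G (punProfile ttil m gm) xA x0 sig m c0 := by
  have hgamdm : Function.update gamhat m gm m = gm := Function.update_self _ _ _
  have hpm : punProfile (C0 := C0) (C := C) ttil m gm m = gm := punProfile_apply_self ttil m gm
  have hmsgm : (fun j => xAstar gamhat phi ttil xA j (Function.update gamhat m gm) m) =
      (fun j => xA j (punProfile ttil m gm) m) := by
    funext j
    rw [xAstar_dev gamhat phi ttil xA j m hgm, if_pos rfl]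
  set tmc0 : Sched N S := fun i => gm i (c0, fun j => xA j (punProfile ttil m gm) m) with htmc0
  set w : M → Sched N S := Function.update (ttil m) m tmc0 with hwdef
  have hu1 : Function.update
      (assigned (Function.update gamhat m gm) (xAstar gamhat phi ttil xA) x0) m
      (fun i => Function.update gamhat m gm m i
        (c0, fun j => xAstar gamhat phi ttil xA j (Function.update gamhat m gm) m)) = w := by
    erw [assigned_dev ttil phi xA x0 gamhat Hs hgm, Function.update_idem, hgamdm, hmsgm]
  have hu2 : Function.update (assigned (punProfile ttil m gm) xA x0) m
      (fun i => punProfile ttil m gm m i (c0, fun j => xA j (punProfile ttil m gm) m)) = w := by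
    erw [assigned_pun ttil xA x0 m gm, Function.update_idem, hpm]
  rw [prinPayoffAt_def G _ _ x0 _ m c0 w hu1, prinPayoffAt_def G _ xA x0 sig m c0 w hu2]
  have hsg : ∀ n', sigstar gamhat t s ttil sig n' (Function.update gamhat m gm)
      (xAstar gamhat phi ttil xA n' (Function.update gamhat m gm)) w =
      sig n' (punProfile ttil m gm)
        (xAstar gamhat phi ttil xA n' (Function.update gamhat m gm)) w :=
    fun n' => sigstar_dev gamhat t s ttil sig n' _ w hgm
  simp only [hsg]
  have hwm : ∀ (n' : N) (a : S n'), (w m n' a : ℝ) = tmc0 n' a := by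
    intro n' a
    rw [hwdef, Function.update_self]
  simp only [hwm]
  refine le_antisymm ?_ ?_
  · refine hMin m gm hgmmem
      (fun n' => xAstar gamhat phi ttil xA n' (Function.update gamhat m gm)) tmc0 _ ?_
    exact mem_shat F hAct (punProfile ttil m gm)
      (fun n' => xA n' (punProfile ttil m gm)) _
  · refine hMin m gm hgmmem (fun n' => xA n' (punProfile ttil m gm)) tmc0 _ ?_
    exact mem_shat F hAct (punProfile ttil m gm)
      (fun n' => xAstar gamhat phi ttil xA n' (Function.update gamhat m gm)) _

lemma selfopt_star (Gam : ∀ m : M, Set (Mech N S (C0 m) (C m)))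
    (Hn : HNone t phi gamhat) (Hs : HSome ttil phi gamhat) (hAct : ActOpt F sig)
    (hPunSelf : ∀ (m : M), ∀ gm ∈ Gam m, ∀ c0 : C0 m,
      prinPayoffAt G (punProfile ttil m gm) xA x0 sig m c0 ≤
        prinPayoffAt G (punProfile ttil m gm) xA x0 sig m (x0 m gm))
    (hMin : ∀ (m : M), ∀ gm ∈ Gam m, ∀ (cn : ∀ n : N, ∀ m' : M, C m' n) (tm : Sched N S),
      ∀ s' ∈ Shat F (Function.update (ttil m) m tm),
        G m (fun n => sig n (punProfile ttil m gm) (cn n) (Function.update (ttil m) m tm)) -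
            ∑ n, (tm n (sig n (punProfile ttil m gm) (cn n)
              (Function.update (ttil m) m tm)) : ℝ) ≤
          G m s' - ∑ n, (tm n (s' n) : ℝ)) :
    SelfOpt G Gam gamhat (xAstar gamhat phi ttil xA) x0 (sigstar gamhat t s ttil sig) := by
  intro m gm hgmmem c0
  by_cases hgm : gm = gamhat m
  · rw [hgm, Function.update_eq_self,
      prinPayoff_hat G ttil t s phi xA x0 sig gamhat Hn m c0,
      prinPayoff_hat G ttil t s phi xA x0 sig gamhat Hn m (x0 m (gamhat m))]
  · rw [selfopt_dev_eq G F ttil t s phi xA x0 sig gamhat Gam Hs hAct hMin hgm hgmmem c0,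
      selfopt_dev_eq G F ttil t s phi xA x0 sig gamhat Gam Hs hAct hMin hgm hgmmem (x0 m gm)]
    exact hPunSelf m gm hgmmem c0

lemma V_dev_le (Gam : ∀ m : M, Set (Mech N S (C0 m) (C m)))
    (Hs : HSome ttil phi gamhat) (hAct : ActOpt F sig)
    (hMin : ∀ (m : M), ∀ gm ∈ Gam m, ∀ (cn : ∀ n : N, ∀ m' : M, C m' n) (tm : Sched N S),
      ∀ s' ∈ Shat F (Function.update (ttil m) m tm),
        G m (fun n => sig n (punProfile ttil m gm) (cn n) (Function.update (ttil m) m tm)) -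
            ∑ n, (tm n (sig n (punProfile ttil m gm) (cn n)
              (Function.update (ttil m) m tm)) : ℝ) ≤
          G m s' - ∑ n, (tm n (s' n) : ℝ))
    {m : M} {gm : Mech N S (C0 m) (C m)} (hgm : gm ≠ gamhat m) (hgmmem : gm ∈ Gam m) :
    V G (Function.update gamhat m gm) (xAstar gamhat phi ttil xA) x0
        (sigstar gamhat t s ttil sig) m ≤
      worst G F m (Function.update (ttil m) m (assigned (punProfile ttil m gm) xA x0 m)) := by
  set tms : Sched N S := assigned (punProfile ttil m gm) xA x0 m with htms
  set w : M → Sched N S := Function.update (ttil m) m tms with hwdef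
  rw [V_def G _ _ x0 _ m w (assigned_dev ttil phi xA x0 gamhat Hs hgm)]
  have hsg : ∀ n', sigstar gamhat t s ttil sig n' (Function.update gamhat m gm)
      (xAstar gamhat phi ttil xA n' (Function.update gamhat m gm)) w =
      sig n' (punProfile ttil m gm)
        (xAstar gamhat phi ttil xA n' (Function.update gamhat m gm)) w :=
    fun n' => sigstar_dev gamhat t s ttil sig n' _ w hgm
  simp only [hsg]
  have hwm : ∀ (n' : N) (a : S n'), (w m n' a : ℝ) = tms n' a := by
    intro n' a
    rw [hwdef, Function.update_self]
  simp only [hwm]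
  refine le_worst G F m w _ (fun s0 hs0 => ?_)
  have h2 : (∑ n', (w m n' (s0 n') : ℝ)) = ∑ n', (tms n' (s0 n') : ℝ) :=
    Finset.sum_congr rfl fun n' _ => by rw [hwdef, Function.update_self]
  rw [h2]
  exact hMin m gm hgmmem
    (fun n' => xAstar gamhat phi ttil xA n' (Function.update gamhat m gm)) tms s0 hs0

end Back



/-- **Theorem 2.** Suppose the competing mechanism game relative to `Γ` is regular,
for each principal `m` the outer infimum defining `V̲^m` is attained by the punishment
schedules `ttil m`, and `Γ^m` contains every mechanism of the given message spaces —
including (since some map `C0 m → T^m` is surjective) mechanisms whose assigned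
schedules are independent of agents' messages and whose range over the principal's own
messages is all of `T^m`. Then the set of Γ-equilibrium allocations equals the set of
PIR-AM allocations: `Z^Γ = Z*`. -/
theorem theorem2
    (G : M → (∀ n, S n) → ℝ) (F : ∀ n : N, S n → ℝ)
    (hM : 2 ≤ Fintype.card M) (hN : 2 ≤ Fintype.card N)
    (Gam : ∀ m : M, Set (Mech N S (C0 m) (C m)))
    (ttil : M → M → Sched N S)
    (hatt : ∀ m : M, minmax G F m = innerSup G F m (ttil m))
    (hreg : Regular G F Gam ttil)
    (huniv : ∀ m : M, Gam m = Set.univ)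
    (hrange : ∀ m : M, ∃ f : C0 m → Sched N S, Function.Surjective f)
    (s : ∀ n, S n) (d : M → N → NNReal) :
    (∃ (gam : MechProfile M N S C0 C) (xA : AgentComm M N S C0 C)
        (x0 : PrinComm M N S C0 C) (sig : ActStrat M N S C0 C),
        GammaEq G F Gam gam xA x0 sig ∧
        act gam xA x0 sig = s ∧ ∀ m n, assigned gam xA x0 m n (s n) = d m n) ↔
      (AM F s d ∧ PIR G F s d) := by
  classical
  obtain ⟨hphi, xA0, x00, sig0, hAct0, hMsg0, hSelfAll0, hPunSelf0, hMin0⟩ := hreg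
  haveI hNne : Nonempty N := Fintype.card_pos_iff.mp (by omega)
  have hexne : ∀ n0 : N, ∃ i : N, i ≠ n0 := fun n0 =>
    Fintype.exists_ne_of_one_lt_card (by omega) n0
  choose phi hinj using hphi
  constructor
  · rintro ⟨gam, xA, x0, sig, ⟨hmem, hAct, hMsg, hSelf, hMech⟩, hact, hass⟩
    constructor
    · refine ⟨assigned gam xA x0, ?_, fun m n => (hass m n).symm⟩
      intro n s'
      have h := hAct n gam (xA n gam) (assigned gam xA x0) s'
      have h2 : sig n gam (xA n gam) (assigned gam xA x0) = s n := congrFun hact n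
      rwa [h2] at h
    · intro m
      obtain ⟨f, hf⟩ := hrange m
      set gm : Mech N S (C0 m) (C m) := fun n c => f c.1 n with hgmdef
      have hgmmem : gm ∈ Gam m := by rw [huniv m]; trivial
      have hgam'm : Function.update gam m gm m = gm := Function.update_self _ _ _
      set tother : M → Sched N S := assigned (Function.update gam m gm) xA x0 with htother
      have hW : prinPayoffAt G (Function.update gam m gm) xA x0 sig m (x0 m gm) =
          V G (Function.update gam m gm) xA x0 sig m := by
        have hu : Function.update (assigned (Function.update gam m gm) xA x0) m
            (fun i => Function.update gam m gm m i
              (x0 m gm, fun j => xA j (Function.update gam m gm) m)) = tother := by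
          rw [← htother]
          have hX : (fun i => Function.update gam m gm m i
              (x0 m gm, fun j => xA j (Function.update gam m gm) m)) = tother m := by
            funext i
            rw [htother, assigned_apply, hgam'm]
          rw [hX, Function.update_eq_self]
        rw [prinPayoffAt_def G _ xA x0 sig m (x0 m gm) tother hu,
          V_def G _ xA x0 sig m tother htother.symm]
      have key : ∀ tm : Sched N S, worst G F m (Function.update tother m tm) ≤
          V G (Function.update gam m gm) xA x0 sig m := by
        intro tm
        obtain ⟨c0, hc0⟩ := hf tm
        have hu : Function.update (assigned (Function.update gam m gm) xA x0) m
            (fun i => Function.update gam m gm m i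
              (c0, fun j => xA j (Function.update gam m gm) m)) =
            Function.update tother m tm := by
          rw [← htother]
          have hX : (fun i => Function.update gam m gm m i
              (c0, fun j => xA j (Function.update gam m gm) m)) = tm := by
            funext i
            rw [hgam'm]
            exact congrFun hc0 i
          rw [hX]
        have h1 := prinPayoffAt_def G (Function.update gam m gm) xA x0 sig m c0
          (Function.update tother m tm) hu
        have ha : (fun n => sig n (Function.update gam m gm)
            (xA n (Function.update gam m gm)) (Function.update tother m tm)) ∈
            Shat (M := M) F (Function.update tother m tm) :=
          mem_shat F hAct _ _ _
        have h2 := worst_le G F m (Function.update tother m tm) ha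
        rw [← h1] at h2
        exact le_trans h2 (le_of_le_of_eq (hSelf m gm hgmmem c0) hW)
      have h3 : innerSup G F m tother ≤ V G (Function.update gam m gm) xA x0 sig m := by
        refine csSup_le ⟨_, ⟨(fun _ _ => 0 : Sched N S), rfl⟩⟩ ?_
        rintro v ⟨tm, rfl⟩
        exact key tm
      have h4 := minmax_le_innerSup G F m tother
      have h5 := hMech m gm hgmmem
      have h6 : V G gam xA x0 sig m = G m s - ∑ n, (d m n : ℝ) := by
        rw [V_def G gam xA x0 sig m (assigned gam xA x0) rfl]
        have h7 : ∀ n, sig n gam (xA n gam) (assigned gam xA x0) = s n :=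
          fun n => congrFun hact n
        simp only [h7]
        rw [Finset.sum_congr rfl (fun n _ => by rw [hass m n])]
      linarith
  · rintro ⟨⟨t, hs, hd⟩, hPIR⟩
    set gamhat : MechProfile M N S C0 C := hatProf phi t ttil with hgamhat
    have Hn : HNone t phi gamhat := fun m' n c0 ms hms =>
      myMech_none m' (phi m') (t m') (fun mm => ttil mm m') (hinj m') n c0 ms hms
    have HnL : HNoneLe t phi gamhat := fun m' n c0 ms hms =>
      myMech_le_none m' (phi m') (t m') (fun mm => ttil mm m') (hinj m') n c0 ms hms (hexne n)
    have Hs : HSome ttil phi gamhat := fun m' n c0 ms m hm hms =>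
      myMech_some m' (phi m') (t m') (fun mm => ttil mm m') (hinj m') n c0 ms hm hms
    have HsL : HSomeLe ttil phi gamhat := fun m' n c0 ms m hm hms =>
      myMech_le_some m' (phi m') (t m') (fun mm => ttil mm m') (hinj m') n c0 ms hm hms (hexne n)
    refine ⟨gamhat, xAstar gamhat phi ttil xA0, x00, sigstar gamhat t s ttil sig0,
      ⟨?_, ?_, ?_, ?_, ?_⟩, ?_, ?_⟩
    · intro m; rw [huniv m]; trivial
    · exact actopt_star F ttil t s sig0 gamhat hAct0 hs
    · exact msgopt_star F ttil t s phi xA0 x00 sig0 gamhat Hn HnL Hs HsL hexne hAct0 hMsg0 hs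
    · exact selfopt_star G F ttil t s phi xA0 x00 sig0 gamhat Gam Hn Hs hAct0 hPunSelf0 hMin0
    · intro m gm hgmmem
      by_cases hgm : gm = gamhat m
      · rw [hgm, Function.update_eq_self]
      · have h1 := V_dev_le G F ttil t s phi xA0 x00 sig0 gamhat Gam Hs hAct0 hMin0 hgm hgmmem
        have h2 := worst_le_innerSup G F m (ttil m) (assigned (punProfile ttil m gm) xA0 x00 m)
        have h3 := hatt m
        have h4 := hPIR m
        have h5 : V G gamhat (xAstar gamhat phi ttil xA0) x00
            (sigstar gamhat t s ttil sig0) m = G m s - ∑ n, (t m n (s n) : ℝ) :=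
          V_hat G ttil t s phi xA0 x00 sig0 gamhat Hn m
        have h6 : (∑ n, (d m n : ℝ)) = ∑ n, (t m n (s n) : ℝ) :=
          Finset.sum_congr rfl fun n _ => by rw [hd m n]
        linarith
    · exact act_hat ttil t s phi xA0 x00 sig0 gamhat Hn
    · intro m n
      have h := assigned_hat ttil t phi xA0 x00 gamhat Hn
      rw [h]
      exact (hd m n).symm

end CMGamma

end
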